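/- Let r₁, r₂, r₃ : ℝ → ℝ be differentiable functions that are pairwise distinct at every point, let M̂ : ℝ → ℝ, and suppose that for each i and every Θ ∈ ℝ, rᵢ'(Θ) = M̂(Θ)/∏_{j≠i}(rᵢ(Θ) − r_j(Θ)). Then the symmetric functions s₁ = r₁ + r₂ + r₃ and s₂ = r₁r₂ + r₁r₃ + r₂r₃ have zero derivative at every Θ ∈ ℝ. -/

import Mathlib

/-!
The weights `1 / ∏_{j ≠ i} (rᵢ - r_j)` are the coefficients of the divided difference
`f[r₁, r₂, r₃] = ∑ᵢ f(rᵢ) / ∏_{j ≠ i} (rᵢ - r_j)`, which vanishes on polynomials of degree at most one.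
Since `s₁' = M̂ ∑ᵢ 1 / ∏_{j ≠ i} (rᵢ - r_j)` and `s₂' = M̂ ∑ᵢ (s₁ - rᵢ) / ∏_{j ≠ i} (rᵢ - r_j)`,
both derivatives vanish.
-/

section DividedDifference

variable {K : Type*} [Field K] {a b c : K}

theorem div_add_div_add_div_prod_sub_eq_zero (hab : a ≠ b) (hac : a ≠ c) (hbc : b ≠ c) (m : K) :
    m / ((a - b) * (a - c)) + m / ((b - a) * (b - c)) + m / ((c - a) * (c - b)) = 0 := by
  have := sub_ne_zero.2 hab; have := sub_ne_zero.2 hac; have := sub_ne_zero.2 hbc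
  have := sub_ne_zero.2 hab.symm; have := sub_ne_zero.2 hac.symm; have := sub_ne_zero.2 hbc.symm
  field_simp
  ring

theorem div_mul_add_div_mul_add_div_mul_prod_sub_eq_zero (hab : a ≠ b) (hac : a ≠ c)
    (hbc : b ≠ c) (m : K) :
    m / ((a - b) * (a - c)) * (b + c) + m / ((b - a) * (b - c)) * (a + c)
      + m / ((c - a) * (c - b)) * (a + b) = 0 := by
  have := sub_ne_zero.2 hab; have := sub_ne_zero.2 hac; have := sub_ne_zero.2 hbc
  have := sub_ne_zero.2 hab.symm; have := sub_ne_zero.2 hac.symm; have := sub_ne_zero.2 hbc.symm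
  field_simp
  ring

end DividedDifference

theorem stmt_8 (r1 r2 r3 M : ℝ → ℝ)
    (hd1 : Differentiable ℝ r1) (hd2 : Differentiable ℝ r2)
    (hd3 : Differentiable ℝ r3)
    (hne12 : ∀ Θ : ℝ, r1 Θ ≠ r2 Θ) (hne13 : ∀ Θ : ℝ, r1 Θ ≠ r3 Θ)
    (hne23 : ∀ Θ : ℝ, r2 Θ ≠ r3 Θ)
    (hr1 : ∀ Θ : ℝ, deriv r1 Θ = M Θ / ((r1 Θ - r2 Θ) * (r1 Θ - r3 Θ)))
    (hr2 : ∀ Θ : ℝ, deriv r2 Θ = M Θ / ((r2 Θ - r1 Θ) * (r2 Θ - r3 Θ)))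
    (hr3 : ∀ Θ : ℝ, deriv r3 Θ = M Θ / ((r3 Θ - r1 Θ) * (r3 Θ - r2 Θ))) :
    ∀ Θ : ℝ,
      deriv (fun s => r1 s + r2 s + r3 s) Θ = 0 ∧
      deriv (fun s => r1 s * r2 s + r1 s * r3 s + r2 s * r3 s) Θ = 0 := by
  intro Θ
  have h1 := (hd1 Θ).hasDerivAt
  have h2 := (hd2 Θ).hasDerivAt
  have h3 := (hd3 Θ).hasDerivAt
  constructor
  · rw [((h1.fun_add h2).fun_add h3).deriv, hr1, hr2, hr3]
    exact div_add_div_add_div_prod_sub_eq_zero (hne12 Θ) (hne13 Θ) (hne23 Θ) (M Θ)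
  · rw [(((h1.fun_mul h2).fun_add (h1.fun_mul h3)).fun_add (h2.fun_mul h3)).deriv, hr1, hr2, hr3]
    linear_combination
      div_mul_add_div_mul_add_div_mul_prod_sub_eq_zero (hne12 Θ) (hne13 Θ) (hne23 Θ) (M Θ)
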